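/- For every integer ℓ ≥ 1, all θ, θ' ∈ ℂ^{2ℓ+1} and every probability measure g on [0,1], the Hellinger distance between the two Gaussian mixtures with the same mixing law satisfies d_H(p_{θ,g}, p_{θ',g}) ≤ 2^{1/4} ‖θ − θ'‖^{1/2}. (Paper's Proposition 3.6.) -/

import Mathlib

open MeasureTheory Measure

noncomputable section

/-- The index set `{-ℓ, …, ℓ}` of Fourier frequencies. -/
abbrev Idx (ℓ : ℕ) := {k : ℤ // k ∈ Finset.Icc (-(ℓ : ℤ)) (ℓ : ℤ)}

/-- The standard complex Gaussian density `γ(z) = π^{-(2ℓ+1)} exp(-‖z‖²)` on `ℂ^{2ℓ+1}`. -/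
def gaussDensity (ℓ : ℕ) (z : Idx ℓ → ℂ) : ℝ :=
  Real.pi ^ (-(2 * (ℓ : ℤ) + 1)) * Real.exp (-(∑ k, ‖z k‖ ^ 2))

/-- The shifted vector `(θ • φ)ₖ = θₖ e^{-2πikφ}`. -/
def bulletF (ℓ : ℕ) (θ : Idx ℓ → ℂ) (φ : ℝ) : Idx ℓ → ℂ :=
  fun k => θ k * Complex.exp (-(2 * Real.pi * ((k : ℤ) : ℝ) * φ : ℝ) * Complex.I)

/-- The mixture density `p_{θ,g}(z) = ∫₀¹ γ(z - θ•φ) dg(φ)`, for a mixing measure `g`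
(a measure on `ℝ` thought of as carried by `[0,1]`). -/
def mixDensity (ℓ : ℕ) (θ : Idx ℓ → ℂ) (g : Measure ℝ) (z : Idx ℓ → ℂ) : ℝ :=
  ∫ φ, gaussDensity ℓ (fun k => z k - bulletF ℓ θ φ k) ∂g

/-- Total variation distance between densities on `ℂ^{2ℓ+1}`. -/
def dTVd (ℓ : ℕ) (q₁ q₂ : (Idx ℓ → ℂ) → ℝ) : ℝ :=
  (1 / 2) * ∫ z, |q₁ z - q₂ z|

/-- Hellinger distance between densities on `ℂ^{2ℓ+1}`. -/
def dHd (ℓ : ℕ) (q₁ q₂ : (Idx ℓ → ℂ) → ℝ) : ℝ :=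
  Real.sqrt (∫ z, (Real.sqrt (q₁ z) - Real.sqrt (q₂ z)) ^ 2)

/-- `‖θ‖ = (Σₖ |θₖ|²)^{1/2}`. -/
def thetaNorm (ℓ : ℕ) (θ : Idx ℓ → ℂ) : ℝ :=
  Real.sqrt (∑ k, ‖θ k‖ ^ 2)

/-- `‖θ‖_{H¹} = (Σₖ k²|θₖ|²)^{1/2}`. -/
def thetaH1 (ℓ : ℕ) (θ : Idx ℓ → ℂ) : ℝ :=
  Real.sqrt (∑ k : Idx ℓ, ((k : ℤ) : ℝ) ^ 2 * ‖θ k‖ ^ 2)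

/-- A probability measure on `[0,1]`, modelled as a probability measure on `ℝ`
giving no mass to the complement of `[0,1]`. -/
def IsProbOn01 (g : Measure ℝ) : Prop :=
  IsProbabilityMeasure g ∧ g (Set.Icc (0 : ℝ) 1)ᶜ = 0


/-!
The squared Hellinger distance between probability densities is `2 - 2 ∫ √(q₁ q₂)`. For two
mixtures with the same mixing law, Cauchy–Schwarz in `φ` bounds the affinity `∫ √(q₁ q₂)` from
below by the `g`-average of the affinities of the components `γ(· - θ•φ)` and `γ(· - θ'•φ)`.
Completing the square, two standard complex Gaussians with means at distance `D` have affinity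
`exp(-D²/4)`, and `‖θ•φ - θ'•φ‖ = ‖θ - θ'‖`. Hence `d_H² ≤ 2 - 2 exp(-D²/4) ≤ min(2, D²/2) ≤ √2 D`.
-/

open Real

section Hellinger

variable {α : Type*} [MeasurableSpace α] {μ : Measure α} {q₁ q₂ : α → ℝ}

lemma integrable_sqrt_mul (h₁ : 0 ≤ q₁) (h₂ : 0 ≤ q₂) (hi₁ : Integrable q₁ μ)
    (hi₂ : Integrable q₂ μ) : Integrable (fun x => √(q₁ x * q₂ x)) μ := by
  refine ((hi₁.add hi₂).div_const 2).mono'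
    (hi₁.aemeasurable.mul hi₂.aemeasurable).sqrt.aestronglyMeasurable
    (Filter.Eventually.of_forall fun x => ?_)
  rw [Real.norm_of_nonneg (sqrt_nonneg _), sqrt_mul (h₁ x), Pi.add_apply]
  nlinarith [sq_sqrt (h₁ x), sq_sqrt (h₂ x), sq_nonneg (√(q₁ x) - √(q₂ x))]

lemma integral_sqrt_sub_sqrt_sq (h₁ : 0 ≤ q₁) (h₂ : 0 ≤ q₂) (hi₁ : Integrable q₁ μ)
    (hi₂ : Integrable q₂ μ) :
    ∫ x, (√(q₁ x) - √(q₂ x)) ^ 2 ∂μ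
      = ∫ x, q₁ x ∂μ + ∫ x, q₂ x ∂μ - 2 * ∫ x, √(q₁ x * q₂ x) ∂μ := by
  have hexpand : ∀ x, (√(q₁ x) - √(q₂ x)) ^ 2 = q₁ x + q₂ x - 2 * √(q₁ x * q₂ x) := by
    intro x
    rw [sub_sq, sq_sqrt (h₁ x), sq_sqrt (h₂ x), sqrt_mul (h₁ x)]
    ring
  simp_rw [hexpand]
  rw [integral_sub (hi₁.fun_add hi₂) ((integrable_sqrt_mul h₁ h₂ hi₁ hi₂).const_mul 2),
    integral_add hi₁ hi₂, integral_const_mul]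

lemma lintegral_ofReal_sqrt_mul_le (h₁ : 0 ≤ q₁) (h₂ : 0 ≤ q₂) (hi₁ : Integrable q₁ μ)
    (hi₂ : Integrable q₂ μ) :
    ∫⁻ x, ENNReal.ofReal √(q₁ x * q₂ x) ∂μ
      ≤ ENNReal.ofReal √((∫ x, q₁ x ∂μ) * ∫ x, q₂ x ∂μ) := by
  have hsq {q : α → ℝ} (h : 0 ≤ q) (hi : Integrable q μ) :
      (∫⁻ x, ENNReal.ofReal √(q x) ^ (2 : ℝ) ∂μ) ^ (1 / 2 : ℝ)
        = ENNReal.ofReal √(∫ x, q x ∂μ) := by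
    simp_rw [ENNReal.ofReal_rpow_of_nonneg (sqrt_nonneg _) zero_le_two, rpow_two,
      sq_sqrt (h _)]
    rw [← ofReal_integral_eq_lintegral_ofReal hi (Filter.Eventually.of_forall h),
      ENNReal.ofReal_rpow_of_nonneg (integral_nonneg h) one_half_pos.le, sqrt_eq_rpow]
  have holder := ENNReal.lintegral_mul_le_Lp_mul_Lq μ Real.HolderConjugate.two_two
    hi₁.aemeasurable.sqrt.ennreal_ofReal hi₂.aemeasurable.sqrt.ennreal_ofReal
  rw [hsq h₁ hi₁, hsq h₂ hi₂, ← ENNReal.ofReal_mul (sqrt_nonneg _),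
    ← sqrt_mul (integral_nonneg h₁)] at holder
  refine le_trans (le_of_eq (lintegral_congr fun x => ?_)) holder
  rw [Pi.mul_apply, sqrt_mul (h₁ x), ENNReal.ofReal_mul (sqrt_nonneg _)]

end Hellinger

section Mixture

variable {α β : Type*} [MeasurableSpace α] [MeasurableSpace β] {μ : Measure α} {ν : Measure β}
  [SFinite μ] [IsProbabilityMeasure ν] {K K₁ K₂ : α → β → ℝ}

lemma lintegral_ofReal_integral_eq_one (hK : 0 ≤ K) (hKm : Measurable (Function.uncurry K))
    (hKi : ∀ x, Integrable (K x) ν) (hK1 : ∀ φ, ∫⁻ x, ENNReal.ofReal (K x φ) ∂μ = 1) :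
    ∫⁻ x, ENNReal.ofReal (∫ φ, K x φ ∂ν) ∂μ = 1 := by
  simp_rw [fun x => ofReal_integral_eq_lintegral_ofReal (hKi x)
    (Filter.Eventually.of_forall (hK x))]
  rw [lintegral_lintegral_swap hKm.ennreal_ofReal.aemeasurable]
  simp [hK1]

lemma integrable_integral_kernel (hK : 0 ≤ K) (hKm : Measurable (Function.uncurry K))
    (hKi : ∀ x, Integrable (K x) ν) (hK1 : ∀ φ, ∫⁻ x, ENNReal.ofReal (K x φ) ∂μ = 1) :
    Integrable (fun x => ∫ φ, K x φ ∂ν) μ := by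
  refine ⟨hKm.stronglyMeasurable.integral_prod_right'.aestronglyMeasurable, ?_⟩
  rw [hasFiniteIntegral_iff_ofReal (Filter.Eventually.of_forall fun x => integral_nonneg (hK x)),
    lintegral_ofReal_integral_eq_one hK hKm hKi hK1]
  exact ENNReal.one_lt_top

lemma integral_integral_kernel_eq_one (hK : 0 ≤ K) (hKm : Measurable (Function.uncurry K))
    (hKi : ∀ x, Integrable (K x) ν) (hK1 : ∀ φ, ∫⁻ x, ENNReal.ofReal (K x φ) ∂μ = 1) :
    ∫ x, ∫ φ, K x φ ∂ν ∂μ = 1 := by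
  rw [integral_eq_lintegral_of_nonneg_ae
    (Filter.Eventually.of_forall fun x => integral_nonneg (hK x))
    (integrable_integral_kernel hK hKm hKi hK1).aestronglyMeasurable,
    lintegral_ofReal_integral_eq_one hK hKm hKi hK1, ENNReal.toReal_one]

/-- Joint concavity of the affinity `∫ √(q₁ q₂)`, for mixtures of densities with the same
mixing law `ν`. -/
lemma le_integral_sqrt_mul_integral_kernel (h₁ : 0 ≤ K₁) (h₂ : 0 ≤ K₂)
    (hm₁ : Measurable (Function.uncurry K₁)) (hm₂ : Measurable (Function.uncurry K₂))
    (hi₁ : ∀ x, Integrable (K₁ x) ν) (hi₂ : ∀ x, Integrable (K₂ x) ν)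
    (hq : Integrable (fun x => √((∫ φ, K₁ x φ ∂ν) * ∫ φ, K₂ x φ ∂ν)) μ) {c : ℝ}
    (hc : ∀ φ, ∫⁻ x, ENNReal.ofReal √(K₁ x φ * K₂ x φ) ∂μ = ENNReal.ofReal c) :
    c ≤ ∫ x, √((∫ φ, K₁ x φ ∂ν) * ∫ φ, K₂ x φ ∂ν) ∂μ := by
  rw [← ENNReal.ofReal_le_ofReal_iff (integral_nonneg fun x => sqrt_nonneg _),
    ofReal_integral_eq_lintegral_ofReal hq (Filter.Eventually.of_forall fun x => sqrt_nonneg _)]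
  calc ENNReal.ofReal c
      = ∫⁻ φ, ∫⁻ x, ENNReal.ofReal √(K₁ x φ * K₂ x φ) ∂μ ∂ν := by simp [hc]
    _ = ∫⁻ x, ∫⁻ φ, ENNReal.ofReal √(K₁ x φ * K₂ x φ) ∂ν ∂μ :=
        (lintegral_lintegral_swap (hm₁.mul hm₂).sqrt.ennreal_ofReal.aemeasurable).symm
    _ ≤ _ := lintegral_mono fun x => lintegral_ofReal_sqrt_mul_le (h₁ x) (h₂ x) (hi₁ x) (hi₂ x)

end Mixture

section ComplexGaussian

lemma integral_exp_neg_norm_sub_sq (c : ℂ) : ∫ z : ℂ, exp (-‖z - c‖ ^ 2) = π := by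
  rw [integral_sub_right_eq_self (fun z : ℂ => exp (-‖z‖ ^ 2)) c]
  simpa using GaussianFourier.integral_rexp_neg_mul_sq_norm (V := ℂ) one_pos

lemma integral_prod_exp_neg_norm_sub_sq {ι : Type*} [Fintype ι] (m : ι → ℂ) :
    ∫ z : ι → ℂ, ∏ k, π⁻¹ * exp (-‖z k - m k‖ ^ 2) = 1 := by
  rw [integral_fintype_prod_volume_eq_prod (f := fun k (w : ℂ) => π⁻¹ * exp (-‖w - m k‖ ^ 2))]
  simp [integral_const_mul, integral_exp_neg_norm_sub_sq, pi_ne_zero]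

lemma card_Idx (ℓ : ℕ) : Fintype.card (Idx ℓ) = 2 * ℓ + 1 := by
  rw [Fintype.card_coe, Int.card_Icc]
  omega

lemma gaussDensity_eq_prod (ℓ : ℕ) (z : Idx ℓ → ℂ) :
    gaussDensity ℓ z = ∏ k, π⁻¹ * exp (-‖z k‖ ^ 2) := by
  rw [Finset.prod_mul_distrib, Finset.prod_const, ← exp_sum, Finset.sum_neg_distrib,
    Finset.card_univ, card_Idx, gaussDensity, inv_pow, ← zpow_natCast, ← zpow_neg]
  push_cast
  ring_nf

lemma gaussDensity_nonneg (ℓ : ℕ) (z : Idx ℓ → ℂ) : 0 ≤ gaussDensity ℓ z := by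
  unfold gaussDensity; positivity

lemma gaussDensity_le (ℓ : ℕ) (z : Idx ℓ → ℂ) :
    gaussDensity ℓ z ≤ π ^ (-(2 * (ℓ : ℤ) + 1)) := by
  refine mul_le_of_le_one_right (zpow_pos pi_pos _).le (exp_le_one_iff.mpr ?_)
  exact neg_nonpos.mpr (Finset.sum_nonneg fun k _ => sq_nonneg _)

lemma continuous_gaussDensity (ℓ : ℕ) : Continuous (gaussDensity ℓ) := by
  unfold gaussDensity
  fun_prop

lemma lintegral_ofReal_gaussDensity_sub (ℓ : ℕ) (m : Idx ℓ → ℂ) :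
    ∫⁻ z : Idx ℓ → ℂ, ENNReal.ofReal (gaussDensity ℓ (fun k => z k - m k)) = 1 := by
  have hint : ∫ z : Idx ℓ → ℂ, gaussDensity ℓ (fun k => z k - m k) = 1 := by
    simpa only [gaussDensity_eq_prod] using integral_prod_exp_neg_norm_sub_sq m
  rw [← ofReal_integral_eq_lintegral_ofReal
    (Integrable.of_integral_ne_zero (hint ▸ one_ne_zero))
    (Filter.Eventually.of_forall fun z => gaussDensity_nonneg ℓ _), hint, ENNReal.ofReal_one]

lemma norm_sub_sq_add_norm_sub_sq (w u v : ℂ) :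
    ‖w - u‖ ^ 2 + ‖w - v‖ ^ 2 = 2 * ‖w - (u + v) / 2‖ ^ 2 + ‖u - v‖ ^ 2 / 2 := by
  simp only [Complex.sq_norm, Complex.normSq_apply, Complex.sub_re, Complex.sub_im,
    Complex.add_re, Complex.add_im, Complex.div_ofNat_re, Complex.div_ofNat_im]
  ring

lemma sqrt_gaussDensity_mul (ℓ : ℕ) (m m' z : Idx ℓ → ℂ) :
    √(gaussDensity ℓ (fun k => z k - m k) * gaussDensity ℓ (fun k => z k - m' k))
      = exp (-(∑ k, ‖m k - m' k‖ ^ 2) / 4)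
        * gaussDensity ℓ (fun k => z k - (m k + m' k) / 2) := by
  have hsum : (∑ k, ‖z k - m k‖ ^ 2) + ∑ k, ‖z k - m' k‖ ^ 2
      = 2 * (∑ k, ‖z k - (m k + m' k) / 2‖ ^ 2) + (∑ k, ‖m k - m' k‖ ^ 2) / 2 := by
    rw [← Finset.sum_add_distrib, Finset.mul_sum, Finset.sum_div, ← Finset.sum_add_distrib]
    exact Finset.sum_congr rfl fun k _ => norm_sub_sq_add_norm_sub_sq (z k) (m k) (m' k)
  unfold gaussDensity
  set S := ∑ k, ‖m k - m' k‖ ^ 2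
  set C := ∑ k, ‖z k - (m k + m' k) / 2‖ ^ 2
  set P : ℝ := π ^ (-(2 * (ℓ : ℤ) + 1))
  have hP : 0 < P := zpow_pos pi_pos _
  have hexp : -(∑ k, ‖z k - m k‖ ^ 2) + -(∑ k, ‖z k - m' k‖ ^ 2) = -S / 4 + -S / 4 + -C + -C := by
    linarith
  rw [← sqrt_sq (by positivity : 0 ≤ exp (-S / 4) * (P * exp (-C)))]
  congr 1
  calc P * exp (-(∑ k, ‖z k - m k‖ ^ 2)) * (P * exp (-(∑ k, ‖z k - m' k‖ ^ 2)))
      = P ^ 2 * exp (-S / 4 + -S / 4 + -C + -C) := by rw [← hexp, exp_add]; ring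
    _ = (exp (-S / 4) * (P * exp (-C))) ^ 2 := by simp only [exp_add]; ring

lemma lintegral_ofReal_sqrt_gaussDensity_mul (ℓ : ℕ) (m m' : Idx ℓ → ℂ) :
    ∫⁻ z : Idx ℓ → ℂ, ENNReal.ofReal
        √(gaussDensity ℓ (fun k => z k - m k) * gaussDensity ℓ (fun k => z k - m' k))
      = ENNReal.ofReal (exp (-(∑ k, ‖m k - m' k‖ ^ 2) / 4)) := by
  simp_rw [sqrt_gaussDensity_mul, ENNReal.ofReal_mul (exp_pos _).le]
  rw [lintegral_const_mul' _ _ ENNReal.ofReal_ne_top, lintegral_ofReal_gaussDensity_sub, mul_one]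

end ComplexGaussian

section GaussianMixture

variable {ℓ : ℕ} (θ θ' : Idx ℓ → ℂ) (g : Measure ℝ)

def gaussKernel (z : Idx ℓ → ℂ) (φ : ℝ) : ℝ :=
  gaussDensity ℓ (fun k => z k - bulletF ℓ θ φ k)

lemma gaussKernel_nonneg : 0 ≤ gaussKernel θ := fun _ _ => gaussDensity_nonneg ℓ _

lemma continuous_uncurry_gaussKernel : Continuous (Function.uncurry (gaussKernel θ)) := by
  unfold gaussKernel bulletF
  exact (continuous_gaussDensity ℓ).comp (by fun_prop)

lemma integrable_gaussKernel [IsFiniteMeasure g] (z : Idx ℓ → ℂ) :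
    Integrable (gaussKernel θ z) g :=
  (integrable_const (π ^ (-(2 * (ℓ : ℤ) + 1)))).mono'
    ((continuous_uncurry_gaussKernel θ).comp (Continuous.prodMk_right z)).aestronglyMeasurable
    (Filter.Eventually.of_forall fun φ => by
      rw [Real.norm_of_nonneg (gaussKernel_nonneg θ z φ)]
      exact gaussDensity_le ℓ _)

lemma lintegral_ofReal_gaussKernel (φ : ℝ) :
    ∫⁻ z, ENNReal.ofReal (gaussKernel θ z φ) = 1 :=
  lintegral_ofReal_gaussDensity_sub ℓ (bulletF ℓ θ φ)

lemma norm_bulletF_sub (φ : ℝ) (k : Idx ℓ) :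
    ‖bulletF ℓ θ φ k - bulletF ℓ θ' φ k‖ = ‖θ k - θ' k‖ := by
  rw [bulletF, bulletF, ← sub_mul, norm_mul, Complex.norm_exp]
  simp

lemma lintegral_ofReal_sqrt_gaussKernel_mul (φ : ℝ) :
    ∫⁻ z, ENNReal.ofReal √(gaussKernel θ z φ * gaussKernel θ' z φ)
      = ENNReal.ofReal (exp (-thetaNorm ℓ (fun k => θ k - θ' k) ^ 2 / 4)) := by
  rw [thetaNorm, sq_sqrt (Finset.sum_nonneg fun k _ => sq_nonneg _)]
  simp_rw [← norm_bulletF_sub θ θ' φ]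
  exact lintegral_ofReal_sqrt_gaussDensity_mul ℓ _ _

lemma mixDensity_nonneg : 0 ≤ mixDensity ℓ θ g :=
  fun z => integral_nonneg (gaussKernel_nonneg θ z)

variable [IsProbabilityMeasure g]

lemma integrable_mixDensity : Integrable (mixDensity ℓ θ g) :=
  integrable_integral_kernel (gaussKernel_nonneg θ) (continuous_uncurry_gaussKernel θ).measurable
    (integrable_gaussKernel θ g) (lintegral_ofReal_gaussKernel θ)

lemma integral_mixDensity : ∫ z, mixDensity ℓ θ g z = 1 :=
  integral_integral_kernel_eq_one (gaussKernel_nonneg θ)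
    (continuous_uncurry_gaussKernel θ).measurable (integrable_gaussKernel θ g)
    (lintegral_ofReal_gaussKernel θ)

lemma exp_neg_sq_div_four_le_integral_sqrt_mixDensity_mul :
    exp (-thetaNorm ℓ (fun k => θ k - θ' k) ^ 2 / 4)
      ≤ ∫ z, √(mixDensity ℓ θ g z * mixDensity ℓ θ' g z) :=
  le_integral_sqrt_mul_integral_kernel (gaussKernel_nonneg θ) (gaussKernel_nonneg θ')
    (continuous_uncurry_gaussKernel θ).measurable (continuous_uncurry_gaussKernel θ').measurable
    (integrable_gaussKernel θ g) (integrable_gaussKernel θ' g)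
    (integrable_sqrt_mul (mixDensity_nonneg θ g) (mixDensity_nonneg θ' g)
      (integrable_mixDensity θ g) (integrable_mixDensity θ' g))
    (lintegral_ofReal_sqrt_gaussKernel_mul θ θ')

end GaussianMixture

lemma two_sub_two_mul_exp_neg_sq_div_four_le {x : ℝ} (hx : 0 ≤ x) :
    2 - 2 * exp (-x ^ 2 / 4) ≤ √2 * x := by
  have hsqrt2 : 1 ≤ √2 := one_le_sqrt.mpr one_le_two
  have hsq2 : √2 ^ 2 = 2 := sq_sqrt zero_le_two
  rcases le_or_gt x 2 with hx2 | hx2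
  · nlinarith [add_one_le_exp (-x ^ 2 / 4)]
  · nlinarith [exp_pos (-x ^ 2 / 4)]

lemma sqrt_sqrt_two_mul {x : ℝ} : √(√2 * x) = (2 : ℝ) ^ ((1 : ℝ) / 4) * √x := by
  rw [sqrt_mul (sqrt_nonneg 2), sqrt_eq_rpow, sqrt_eq_rpow, ← rpow_mul zero_le_two]
  norm_num

theorem hellinger_mixture_le_general (ℓ : ℕ) (θ θ' : Idx ℓ → ℂ)
    (g : Measure ℝ) (hg : IsProbOn01 g) :
    dHd ℓ (mixDensity ℓ θ g) (mixDensity ℓ θ' g)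
      ≤ (2 : ℝ) ^ ((1 : ℝ) / 4) * Real.sqrt (thetaNorm ℓ (fun k => θ k - θ' k)) := by
  have := hg.1
  have hsq : ∫ z, (√(mixDensity ℓ θ g z) - √(mixDensity ℓ θ' g z)) ^ 2
      ≤ √2 * thetaNorm ℓ (fun k => θ k - θ' k) := by
    rw [integral_sqrt_sub_sqrt_sq (mixDensity_nonneg θ g) (mixDensity_nonneg θ' g)
      (integrable_mixDensity θ g) (integrable_mixDensity θ' g), integral_mixDensity,
      integral_mixDensity]
    linarith [exp_neg_sq_div_four_le_integral_sqrt_mixDensity_mul θ θ' g,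
      two_sub_two_mul_exp_neg_sq_div_four_le (x := thetaNorm ℓ (fun k => θ k - θ' k))
        (sqrt_nonneg _)]
  calc dHd ℓ (mixDensity ℓ θ g) (mixDensity ℓ θ' g)
      ≤ √(√2 * thetaNorm ℓ (fun k => θ k - θ' k)) := sqrt_le_sqrt hsq
    _ = _ := sqrt_sqrt_two_mul

/-- **Proposition 3.6 of the paper.** For any `θ, θ' ∈ ℂ^{2ℓ+1}` and any probability measure `g`
on `[0,1]`, the Hellinger distance between the two Gaussian mixtures with the same mixing law
satisfies `d_H(p_{θ,g}, p_{θ',g}) ≤ 2^{1/4} ‖θ - θ'‖^{1/2}`. -/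
theorem hellinger_mixture_le (ℓ : ℕ) (hℓ : 1 ≤ ℓ) (θ θ' : Idx ℓ → ℂ)
    (g : Measure ℝ) (hg : IsProbOn01 g) :
    dHd ℓ (mixDensity ℓ θ g) (mixDensity ℓ θ' g)
      ≤ (2 : ℝ) ^ ((1 : ℝ) / 4) * Real.sqrt (thetaNorm ℓ (fun k => θ k - θ' k)) :=
  hellinger_mixture_le_general ℓ θ θ' g hg

end
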